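/- arXiv:1203.4502 — 3 statements merged into one kernel-verified Lean document; each statement's English description precedes it below -/
import Mathlib

section
/- Let d ∈ ℕ, d ≥ 2, let Φ: ℝ^d → ℝ be continuously differentiable, and let g: ℝ^d × ℝ^d → ℝ be continuously differentiable. Define (A g)(ξ, v) = −⟨v, ∇_ξ g(ξ, v)⟩ + (1/(d−1)) ⟨(I − v vᵀ) ∇Φ(ξ), ∇_v g(ξ, v)⟩. Then for every ξ ∈ ℝ^d: −∫_{S^{d−1}} (A g)(ξ, v) dν(v) = Σ_{i=1}^d ∂_{ξ_i} ( ∫_{S^{d−1}} v_i g(ξ, v) dν(v) ) − ⟨∇Φ(ξ), ∫_{S^{d−1}} v g(ξ, v) dν(v)⟩. (This is the formula (AΠ)*g = −ΠAg = (∇_ξ − ∇_ξΦ) · ∫_{S^{d−1}} v g dν used in the hypocoercivity proof.) -/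
open MeasureTheory
open scoped RealInnerProductSpace

/-- `ν` is the normalized rotation-invariant surface measure on the unit sphere of
`ℝ^n = EuclideanSpace ℝ (Fin n)`: a Borel probability measure carried by the unit sphere
and invariant under every linear isometry of the ambient space. -/
def IsUniformSphereMeasure {n : ℕ} (ν : Measure (EuclideanSpace ℝ (Fin n))) : Prop :=
  IsProbabilityMeasure ν ∧
  ν ((Metric.sphere (0 : EuclideanSpace ℝ (Fin n)) 1)ᶜ) = 0 ∧
  ∀ R : EuclideanSpace ℝ (Fin n) ≃ₗᵢ[ℝ] EuclideanSpace ℝ (Fin n), ν.map R = ν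

/-- The transport operator of the fiber lay-down model:
`(A g)(ξ, v) = -⟨v, ∇_ξ g⟩ + (1/(d-1)) ⟨(I - v vᵀ)∇Φ(ξ), ∇_v g⟩`. -/
noncomputable def transportOp (d : ℕ) (Φ : EuclideanSpace ℝ (Fin d) → ℝ)
    (g : EuclideanSpace ℝ (Fin d) × EuclideanSpace ℝ (Fin d) → ℝ)
    (p : EuclideanSpace ℝ (Fin d) × EuclideanSpace ℝ (Fin d)) : ℝ :=
  -⟪p.2, gradient (fun x => g (x, p.2)) p.1⟫
    + (1 / ((d : ℝ) - 1)) *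
        ⟪gradient Φ p.1 - ⟪gradient Φ p.1, p.2⟫ • p.2, gradient (fun u => g (p.1, u)) p.2⟫

/-! Rotation invariance of `ν` gives `∫ Dφ(v)(K v) dν = 0` for every skew-adjoint `K` and every
`C¹` function `φ`: differentiate the constant function `t ↦ ∫ φ(exp(t K) v) dν` at `t = 0`.
Taking for `K` the generators `v ↦ ⟨b_j, v⟩ w - ⟨w, v⟩ b_j` of the rotations in the planes
spanned by `w` and the vectors `b_j` of an orthonormal basis, for `φ` the functions
`v ↦ h(v) ⟨b_j, v⟩`, and summing over `j` gives the integration by parts formula on the sphere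
`∫ ⟨(I - v vᵀ) w, ∇h(v)⟩ dν = (d - 1) ⟨w, ∫ h(v) v dν⟩`. With `h = g(ξ, ·)` and `w = ∇Φ(ξ)`
it turns the second term of `A g` into `⟨∇Φ(ξ), ∫ v g dν⟩`; the first term is the
`ξ`-divergence of `∫ v g dν` by differentiation under the integral sign, `ν` being a finite
measure carried by a compact set. -/

section CompactSupport

variable {E F : Type*} [NormedAddCommGroup E] [MeasurableSpace E] [OpensMeasurableSpace E]
  [NormedAddCommGroup F] {ν : Measure E} [IsFiniteMeasure ν] {S : Set E}

theorem Continuous.integrable_of_ae_mem_isCompact (hS : IsCompact S) (hνS : ∀ᵐ v ∂ν, v ∈ S)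
    {f : E → F} (hf : Continuous f) : Integrable f ν := by
  rw [← Measure.restrict_eq_self_of_ae_mem hνS]
  exact hf.continuousOn.integrableOn_compact hS

variable [SecondCountableTopology E] {X : Type*} [NormedAddCommGroup X] [NormedSpace ℝ X]
  [ProperSpace X] [NormedSpace ℝ F]

theorem hasFDerivAt_integral_of_continuous_fderiv (hS : IsCompact S) (hνS : ∀ᵐ v ∂ν, v ∈ S)
    {f : X × E → F} {f' : X × E → X →L[ℝ] F} (hf : Continuous f) (hf' : Continuous f')
    (hff' : ∀ x v, HasFDerivAt (fun y => f (y, v)) (f' (x, v)) x) (x₀ : X) :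
    HasFDerivAt (fun x => ∫ v, f (x, v) ∂ν) (∫ v, f' (x₀, v) ∂ν) x₀ := by
  obtain ⟨C, hC⟩ :=
    ((isCompact_closedBall x₀ 1).prod hS).exists_bound_of_continuousOn hf'.continuousOn
  exact hasFDerivAt_integral_of_dominated_of_fderiv_le (Metric.ball_mem_nhds x₀ one_pos)
    (.of_forall fun x => (hf.comp (Continuous.prodMk_right x)).aestronglyMeasurable)
    ((hf.comp (Continuous.prodMk_right x₀)).integrable_of_ae_mem_isCompact hS hνS)
    (hf'.comp (Continuous.prodMk_right x₀)).aestronglyMeasurable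
    (hνS.mono fun v hv x hx => hC (x, v) ⟨Metric.ball_subset_closedBall hx, hv⟩)
    (integrable_const C) (.of_forall fun v x _ => hff' x v)

end CompactSupport

section InnerProductSpace

variable {E : Type*} [NormedAddCommGroup E] [InnerProductSpace ℝ E]

theorem InnerProductSpace.rankOne_sub_rankOne_mem_skewAdjoint {𝕜 H : Type*} [RCLike 𝕜]
    [NormedAddCommGroup H] [InnerProductSpace 𝕜 H] [CompleteSpace H] (x y : H) :
    rankOne 𝕜 x y - rankOne 𝕜 y x ∈ skewAdjoint (H →L[𝕜] H) := by
  rw [skewAdjoint.mem_iff, ContinuousLinearMap.star_eq_adjoint, map_sub, adjoint_rankOne,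
    adjoint_rankOne, neg_sub]

theorem ContDiff.continuous_gradient [CompleteSpace E] {h : E → ℝ} (hh : ContDiff ℝ 1 h) :
    Continuous (gradient h) :=
  (InnerProductSpace.toDual ℝ E).symm.continuous.comp (hh.continuous_fderiv one_ne_zero)

theorem inner_gradient_comp_prodMk_left [CompleteSpace E] {F : Type*} [NormedAddCommGroup F]
    [NormedSpace ℝ F] {g : E × F → ℝ} {x : E} {v : F} (hg : DifferentiableAt ℝ g (x, v)) (u : E) :
    ⟪u, gradient (fun y => g (y, v)) x⟫ = fderiv ℝ g (x, v) (u, 0) := by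
  have hd : HasFDerivAt (fun y => g (y, v)) _ x :=
    hg.hasFDerivAt.comp x (hasFDerivAt_prodMk_left x v)
  rw [real_inner_comm, gradient, InnerProductSpace.toDual_symm_apply, hd.fderiv]
  rfl

theorem fderiv_mul_inner_apply [CompleteSpace E] {h : E → ℝ} {v : E}
    (hh : DifferentiableAt ℝ h v) (a y : E) :
    fderiv ℝ (fun u => h u * ⟪a, u⟫) v y = h v * ⟪a, y⟫ + ⟪a, v⟫ * ⟪gradient h v, y⟫ := by
  have hd : HasFDerivAt (fun u => h u * ⟪a, u⟫) _ v :=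
    hh.hasFDerivAt.mul (innerSL ℝ a).hasFDerivAt
  rw [hd.fderiv, gradient, InnerProductSpace.toDual_symm_apply]
  simp

theorem OrthonormalBasis.sum_fderiv_mul_inner_apply_rankOne_sub_rankOne [CompleteSpace E]
    {ι : Type*} [Fintype ι] (b : OrthonormalBasis ι ℝ E) {h : E → ℝ} {v : E}
    (hh : DifferentiableAt ℝ h v) (hv : ‖v‖ = 1) (w : E) :
    ∑ j, fderiv ℝ (fun u => h u * ⟪b j, u⟫) v
        ((InnerProductSpace.rankOne ℝ w (b j) - InnerProductSpace.rankOne ℝ (b j) w) v)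
      = ⟪w - ⟪w, v⟫ • v, gradient h v⟫ - (Fintype.card ι - 1) * (h v * ⟪w, v⟫) := by
  have hsummand : ∀ j, fderiv ℝ (fun u => h u * ⟪b j, u⟫) v
        ((InnerProductSpace.rankOne ℝ w (b j) - InnerProductSpace.rankOne ℝ (b j) w) v)
      = h v * (⟪v, b j⟫ * ⟪b j, w⟫) - h v * ⟪w, v⟫
        + ⟪gradient h v, w⟫ * (⟪v, b j⟫ * ⟪b j, v⟫)
        - ⟪w, v⟫ * (⟪gradient h v, b j⟫ * ⟪b j, v⟫) := fun j => by
    simp only [sub_apply, InnerProductSpace.rankOne_apply,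
      fderiv_mul_inner_apply hh, inner_sub_right, inner_smul_right, real_inner_self_eq_norm_sq,
      b.norm_eq_one, real_inner_comm (b j) v]
    ring
  simp only [hsummand, Finset.sum_add_distrib, Finset.sum_sub_distrib, ← Finset.mul_sum,
    b.sum_inner_mul_inner, Finset.sum_const, Finset.card_univ, nsmul_eq_mul,
    real_inner_self_eq_norm_sq, hv, inner_sub_left, inner_smul_left]
  simp only [real_inner_comm, conj_trivial]
  ring

end InnerProductSpace

section RotationInvariance

variable {E : Type*} [NormedAddCommGroup E] [InnerProductSpace ℝ E] [FiniteDimensional ℝ E]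
  [MeasurableSpace E] [BorelSpace E] {ν : Measure E} [IsFiniteMeasure ν]

theorem integral_fderiv_apply_skewAdjoint_eq_zero {S : Set E} (hS : IsCompact S)
    (hνS : ∀ᵐ v ∂ν, v ∈ S) (hinv : ∀ R : E ≃ₗᵢ[ℝ] E, ν.map R = ν) {K : E →L[ℝ] E}
    (hK : K ∈ skewAdjoint (E →L[ℝ] E)) {φ : E → ℝ} (hφ : ContDiff ℝ 1 φ) :
    ∫ v, fderiv ℝ φ v (K v) ∂ν = 0 := by
  -- `NormedSpace.exp` is taken with respect to a normed `ℚ`-algebra structure, which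
  -- `E →L[ℝ] E` does not carry as an instance
  let +nondep : NormedAlgebra ℚ (E →L[ℝ] E) := .restrictScalars ℚ ℝ _
  set R : ℝ → E →L[ℝ] E := fun t => NormedSpace.exp (t • K)
  have hφ' : Continuous (fderiv ℝ φ) := hφ.continuous_fderiv one_ne_zero
  have hconst : (fun t => ∫ v, φ (R t v) ∂ν) = fun _ => ∫ v, φ v ∂ν := by
    funext t
    have hR : ν.map (R t) = ν := hinv (Unitary.linearIsometryEquiv
      ⟨R t, NormedSpace.exp_mem_unitary_of_mem_skewAdjoint (skewAdjoint.smul_mem t hK)⟩)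
    rw [← integral_map (R t).continuous.aemeasurable hφ.continuous.aestronglyMeasurable, hR]
  have hderiv := hasFDerivAt_integral_of_continuous_fderiv (X := ℝ) hS hνS
    (f := fun p => φ (R p.1 p.2))
    (f' := fun p =>
      ContinuousLinearMap.toSpanSingletonCLE (fderiv ℝ φ (R p.1 p.2) (R p.1 (K p.2))))
    (by fun_prop) (by fun_prop) (fun t v => ?_) 0
  · rw [hconst] at hderiv
    have := congrArg (· 1) (hderiv.unique (hasFDerivAt_const _ 0))
    simpa [ContinuousLinearEquiv.integral_comp_comm, R] using this
  · exact (((hφ.differentiable one_ne_zero) _).hasFDerivAt.comp_hasDerivAt t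
      ((ContinuousLinearMap.apply ℝ E v).hasFDerivAt.comp_hasDerivAt t
        (hasDerivAt_exp_smul_const K t))).hasFDerivAt

theorem integral_inner_sub_inner_smul_gradient (hν : ∀ᵐ v ∂ν, v ∈ Metric.sphere (0 : E) 1)
    (hinv : ∀ R : E ≃ₗᵢ[ℝ] E, ν.map R = ν) {h : E → ℝ} (hh : ContDiff ℝ 1 h) (w : E) :
    ∫ v, ⟪w - ⟪w, v⟫ • v, gradient h v⟫ ∂ν
      = (Module.finrank ℝ E - 1 : ℝ) * ⟪w, ∫ v, h v • v ∂ν⟫ := by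
  let b := stdOrthonormalBasis ℝ E
  have hS := isCompact_sphere (0 : E) 1
  have hint : ∀ {f : E → ℝ}, Continuous f → Integrable f ν :=
    fun hf => hf.integrable_of_ae_mem_isCompact hS hν
  have hφ : ∀ j, ContDiff ℝ 1 (fun u => h u * ⟪b j, u⟫) :=
    fun j => hh.mul (innerSL ℝ (b j)).contDiff
  have hrot : ∀ j, ∫ v, fderiv ℝ (fun u => h u * ⟪b j, u⟫) v
      ((InnerProductSpace.rankOne ℝ w (b j) - InnerProductSpace.rankOne ℝ (b j) w) v) ∂ν = 0 :=
    fun j => integral_fderiv_apply_skewAdjoint_eq_zero hS hν hinv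
      (InnerProductSpace.rankOne_sub_rankOne_mem_skewAdjoint _ _) (hφ j)
  have hsum : ∫ v, (⟪w - ⟪w, v⟫ • v, gradient h v⟫
      - (Module.finrank ℝ E - 1 : ℝ) * (h v * ⟪w, v⟫)) ∂ν = 0 := by
    have hpt : ∀ᵐ v ∂ν, ∑ j, fderiv ℝ (fun u => h u * ⟪b j, u⟫) v
        ((InnerProductSpace.rankOne ℝ w (b j) - InnerProductSpace.rankOne ℝ (b j) w) v)
        = ⟪w - ⟪w, v⟫ • v, gradient h v⟫ - (Module.finrank ℝ E - 1 : ℝ) * (h v * ⟪w, v⟫) :=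
      hν.mono fun v hv => by
        rw [b.sum_fderiv_mul_inner_apply_rankOne_sub_rankOne ((hh.differentiable one_ne_zero) v)
          (mem_sphere_zero_iff_norm.1 hv), Fintype.card_fin]
    rw [← integral_congr_ae hpt, integral_finsetSum _ fun j _ => hint <|
      ((hφ j).continuous_fderiv one_ne_zero).clm_apply (ContinuousLinearMap.continuous _)]
    exact Finset.sum_eq_zero fun j _ => hrot j
  have hgrad := hh.continuous_gradient
  rw [integral_sub (hint (by fun_prop)) ((hint (by fun_prop)).const_mul _), integral_const_mul,
    sub_eq_zero] at hsum
  rw [hsum, ← integral_inner (f := fun v => h v • v)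
    ((hh.continuous.smul continuous_id).integrable_of_ae_mem_isCompact hS hν)]
  simp only [real_inner_smul_right]

end RotationInvariance

theorem EuclideanSpace.sum_fderiv_integral_mul_apply_single {d : ℕ}
    {ν : Measure (EuclideanSpace ℝ (Fin d))} [IsFiniteMeasure ν]
    {S : Set (EuclideanSpace ℝ (Fin d))} (hS : IsCompact S) (hνS : ∀ᵐ v ∂ν, v ∈ S)
    {g : EuclideanSpace ℝ (Fin d) × EuclideanSpace ℝ (Fin d) → ℝ} (hg : ContDiff ℝ 1 g)
    (ξ : EuclideanSpace ℝ (Fin d)) :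
    ∑ i, fderiv ℝ (fun x => ∫ v, g (x, v) * v i ∂ν) ξ (EuclideanSpace.single i 1)
      = ∫ v, fderiv ℝ g (ξ, v) (v, 0) ∂ν := by
  have hD : Continuous (fderiv ℝ g) := hg.continuous_fderiv one_ne_zero
  have hi : ∀ i, fderiv ℝ (fun x => ∫ v, g (x, v) * v i ∂ν) ξ (EuclideanSpace.single i 1)
      = ∫ v, v i * fderiv ℝ g (ξ, v) (EuclideanSpace.single i 1, 0) ∂ν := by
    intro i
    have hderiv := hasFDerivAt_integral_of_continuous_fderiv hS hνS
      (f := fun p => g p * p.2 i)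
      (f' := fun p => p.2 i • (fderiv ℝ g p).comp (.inl ℝ _ _))
      (by fun_prop) (by fun_prop) (fun x v => ?_) ξ
    · rw [hderiv.fderiv, ContinuousLinearMap.integral_apply
        (Continuous.integrable_of_ae_mem_isCompact hS hνS (by fun_prop))]
      rfl
    · exact ((hg.differentiable one_ne_zero (x, v)).hasFDerivAt.comp x
        (hasFDerivAt_prodMk_left x v)).mul_const (v i)
  have hcoord : ∀ (L : EuclideanSpace ℝ (Fin d) →L[ℝ] ℝ) v,
      L v = ∑ i, v i * L (EuclideanSpace.single i 1) := fun L v => by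
    conv_lhs => rw [← (EuclideanSpace.basisFun (Fin d) ℝ).sum_repr v]
    simp
  rw [Finset.sum_congr rfl fun i _ => hi i, ← integral_finsetSum _ fun i _ =>
    Continuous.integrable_of_ae_mem_isCompact hS hνS (by fun_prop)]
  exact integral_congr_ae
    (.of_forall fun v => (hcoord ((fderiv ℝ g (ξ, v)).comp (.inl ℝ _ _)) v).symm)

theorem transport_operator_projected_adjoint_general
    (d : ℕ) (hd : 2 ≤ d)
    (ν : Measure (EuclideanSpace ℝ (Fin d))) (hν : IsUniformSphereMeasure ν)
    (Φ : EuclideanSpace ℝ (Fin d) → ℝ)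
    (g : EuclideanSpace ℝ (Fin d) × EuclideanSpace ℝ (Fin d) → ℝ) (hg : ContDiff ℝ 1 g)
    (ξ : EuclideanSpace ℝ (Fin d)) :
    -∫ v, transportOp d Φ g (ξ, v) ∂ν
      = (∑ i : Fin d,
          fderiv ℝ (fun x => ∫ v, g (x, v) * v i ∂ν) ξ (EuclideanSpace.single i (1 : ℝ)))
        - ⟪gradient Φ ξ, ∫ v, g (ξ, v) • v ∂ν⟫ := by
  obtain ⟨_, hsphere, hinv⟩ := hν
  have hνS : ∀ᵐ v ∂ν, v ∈ Metric.sphere (0 : EuclideanSpace ℝ (Fin d)) 1 := ae_iff.2 hsphere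
  have hint : ∀ {f : EuclideanSpace ℝ (Fin d) → ℝ}, Continuous f → Integrable f ν :=
    fun hf => hf.integrable_of_ae_mem_isCompact (isCompact_sphere 0 1) hνS
  have hslice : ContDiff ℝ 1 fun u => g (ξ, u) := hg.comp (contDiff_const.prodMk contDiff_id)
  have hD := hg.continuous_fderiv one_ne_zero
  have hgrad := hslice.continuous_gradient
  have hd₁ : (d : ℝ) - 1 ≠ 0 := by
    have : (2 : ℝ) ≤ d := by exact_mod_cast hd
    linarith
  have htransport : ∀ v, transportOp d Φ g (ξ, v)
      = 1 / ((d : ℝ) - 1)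
          * ⟪gradient Φ ξ - ⟪gradient Φ ξ, v⟫ • v, gradient (fun u => g (ξ, u)) v⟫
        - fderiv ℝ g (ξ, v) (v, 0) := fun v => by
    rw [transportOp, inner_gradient_comp_prodMk_left (hg.differentiable one_ne_zero _)]
    ring
  rw [integral_congr_ae (.of_forall htransport),
    integral_sub ((hint (by fun_prop)).const_mul _) (hint (by fun_prop)), integral_const_mul,
    integral_inner_sub_inner_smul_gradient hνS hinv hslice, finrank_euclideanSpace_fin,
    EuclideanSpace.sum_fderiv_integral_mul_apply_single (isCompact_sphere 0 1) hνS hg ξ]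
  field_simp
  ring

/-- The formula `(AΠ)* g = -Π A g = (∇_ξ - ∇_ξ Φ) ⬝ ∫_{S^{d-1}} v g dν` from the
hypocoercivity proof: for `d ≥ 2`, `Φ` and `g` of class `C¹`, and every `ξ ∈ ℝ^d`,
`-∫_{S^{d-1}} (A g)(ξ, v) dν(v)
   = ∑_{i=1}^d ∂_{ξ_i} (∫_{S^{d-1}} v_i g(ξ,v) dν(v)) - ⟨∇Φ(ξ), ∫_{S^{d-1}} v g(ξ,v) dν(v)⟩`. -/
theorem transport_operator_projected_adjoint
    (d : ℕ) (hd : 2 ≤ d)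
    (ν : Measure (EuclideanSpace ℝ (Fin d))) (hν : IsUniformSphereMeasure ν)
    (Φ : EuclideanSpace ℝ (Fin d) → ℝ) (hΦ : ContDiff ℝ 1 Φ)
    (g : EuclideanSpace ℝ (Fin d) × EuclideanSpace ℝ (Fin d) → ℝ) (hg : ContDiff ℝ 1 g)
    (ξ : EuclideanSpace ℝ (Fin d)) :
    -∫ v, transportOp d Φ g (ξ, v) ∂ν
      = (∑ i : Fin d,
          fderiv ℝ (fun x => ∫ v, g (x, v) * v i ∂ν) ξ (EuclideanSpace.single i (1 : ℝ)))
        - ⟪gradient Φ ξ, ∫ v, g (ξ, v) • v ∂ν⟫ :=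
  transport_operator_projected_adjoint_general d hd ν hν Φ g hg ξ
end

section
/- Let d ∈ ℕ, d ≥ 2, let Φ: ℝ^d → ℝ be continuously differentiable, and let μ = (e^{−Φ(ξ)} dξ) ⊗ ν on ℝ^d × S^{d−1}. Define, for smooth compactly supported g: ℝ^d × ℝ^d → ℝ, (A g)(ξ, v) = −⟨v, ∇_ξ g(ξ, v)⟩ + (1/(d−1)) ⟨(I − v vᵀ) ∇Φ(ξ), ∇_v g(ξ, v)⟩. Then for all smooth compactly supported g, h: ℝ^d × ℝ^d → ℝ one has ∫_{ℝ^d × S^{d−1}} (A g) h dμ + ∫_{ℝ^d × S^{d−1}} g (A h) dμ = 0; that is, the transport operator A is antisymmetric on L²(μ). -/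
open MeasureTheory
open scoped RealInnerProductSpace

open Real Metric Function


variable {E : Type*} [NormedAddCommGroup E] [InnerProductSpace ℝ E]
  [MeasurableSpace E] [BorelSpace E] [FiniteDimensional ℝ E]
  {μ : Measure E} [μ.IsAddHaarMeasure]

/-- Integral of a directional derivative of a `C¹` compactly supported function vanishes. -/
theorem my_integral_fderiv_eq_zero (F : E → ℝ) (hF : ContDiff ℝ 1 F)
    (hsupp : HasCompactSupport F) (v : E) :
    ∫ x, fderiv ℝ F x v ∂μ = 0 := by
  obtain ⟨C, hC⟩ := ContDiff.lipschitzWith_of_hasCompactSupport hsupp hF one_ne_zero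
  obtain ⟨R, hR0, hRsub⟩ := hsupp.isBounded.subset_ball_lt 0 0
  set χb : ContDiffBump (0 : E) := ⟨R, 2 * R, hR0, by linarith⟩ with hχb
  have hχsm : ContDiff ℝ (⊤ : ℕ∞) (χb : E → ℝ) := χb.contDiff (n := (⊤ : ℕ∞))
  have hχsupp : HasCompactSupport (χb : E → ℝ) := χb.hasCompactSupport
  obtain ⟨D, hD⟩ := ContDiff.lipschitzWith_of_hasCompactSupport hχsupp hχsm (by simp)
  have key := hD.integral_lineDeriv_mul_eq hC hsupp (μ := μ) v
  have hFd : Differentiable ℝ F := hF.differentiable one_ne_zero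
  have hLHS : ∀ x : E, lineDeriv ℝ (χb : E → ℝ) x v * F x = 0 := by
    intro x
    by_cases hx : x ∈ tsupport F
    · have hx' : x ∈ ball (0 : E) R := hRsub hx
      have h1 : (χb : E → ℝ) =ᶠ[nhds x] (fun _ => 1) := by
        filter_upwards [isOpen_ball.mem_nhds hx'] with y hy
        exact χb.one_of_mem_closedBall (by simp only [mem_closedBall_zero_iff]; exact le_of_lt (by simpa [χb] using (mem_ball_zero_iff.mp hy)))
      have : lineDeriv ℝ (χb : E → ℝ) x v = 0 := by
        rw [(hχsm.differentiable (by simp) x).lineDeriv_eq_fderiv, h1.fderiv_eq,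
          fderiv_const_apply, ContinuousLinearMap.zero_apply]
      simp [this]
    · simp [image_eq_zero_of_notMem_tsupport hx]
  have hRHS : ∀ x : E, lineDeriv ℝ F x (-v) * (χb : E → ℝ) x = -(fderiv ℝ F x v) := by
    intro x
    by_cases hx : x ∈ tsupport F
    · have hχ1 : (χb : E → ℝ) x = 1 :=
        χb.one_of_mem_closedBall (by simp only [mem_closedBall_zero_iff]; exact le_of_lt (by simpa [χb] using mem_ball_zero_iff.mp (hRsub hx)))
      rw [hχ1, mul_one, (hFd x).lineDeriv_eq_fderiv, map_neg]
    · have h0 : fderiv ℝ F x = 0 := by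
        rw [(notMem_tsupport_iff_eventuallyEq.mp hx).fderiv_eq]
        exact fderiv_const_apply 0
      rw [(hFd x).lineDeriv_eq_fderiv, h0]
      simp
  have : (0 : ℝ) = ∫ x, -(fderiv ℝ F x v) ∂μ := by
    calc (0:ℝ) = ∫ x, lineDeriv ℝ (χb : E → ℝ) x v * F x ∂μ := by simp [hLHS]
    _ = ∫ x, lineDeriv ℝ F x (-v) * (χb : E → ℝ) x ∂μ := key
    _ = ∫ x, -(fderiv ℝ F x v) ∂μ := by simp_rw [hRHS]
  rw [integral_neg] at this
  linarith

/-- Weighted integration by parts on `E` with weight `exp (-Φ)`. -/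
theorem my_integral_fderiv_fun_mul_exp [SigmaFinite μ] (Φ : E → ℝ) (hΦ : ContDiff ℝ 1 Φ)
    (F : E → ℝ) (hF : ContDiff ℝ 1 F) (hsupp : HasCompactSupport F) (v : E) :
    ∫ x, fderiv ℝ F x v * exp (-Φ x) ∂μ
      = ∫ x, F x * (fderiv ℝ Φ x v * exp (-Φ x)) ∂μ := by
  have hw : ContDiff ℝ 1 (fun x : E => exp (-Φ x)) := (hΦ.neg).exp
  have hG : ContDiff ℝ 1 (fun x : E => F x * exp (-Φ x)) := hF.mul hw
  have hGsupp : HasCompactSupport (fun x : E => F x * exp (-Φ x)) :=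
    hsupp.mul_right
  have key := my_integral_fderiv_eq_zero (μ := μ) _ hG hGsupp v
  have hder : ∀ x : E, fderiv ℝ (fun x : E => F x * exp (-Φ x)) x v
      = fderiv ℝ F x v * exp (-Φ x) - F x * (fderiv ℝ Φ x v * exp (-Φ x)) := by
    intro x
    rw [fderiv_fun_mul (hF.differentiable one_ne_zero x) (hw.differentiable one_ne_zero x)]
    have : fderiv ℝ (fun x : E => exp (-Φ x)) x
        = exp (-Φ x) • fderiv ℝ (fun x : E => -Φ x) x :=
      fderiv_exp ((hΦ.differentiable one_ne_zero x).neg)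
    rw [ContinuousLinearMap.add_apply, ContinuousLinearMap.smul_apply,
      ContinuousLinearMap.smul_apply, this]
    rw [fderiv_fun_neg]
    simp only [ContinuousLinearMap.smul_apply, ContinuousLinearMap.neg_apply, smul_eq_mul]
    ring
  simp_rw [hder] at key
  -- integrability of each piece
  have hcont1 : Continuous fun x : E => fderiv ℝ F x v * exp (-Φ x) :=
    ((hF.continuous_fderiv one_ne_zero).clm_apply continuous_const).mul
      (((hΦ.continuous).neg).rexp)
  have hsupp1 : HasCompactSupport fun x : E => fderiv ℝ F x v * exp (-Φ x) := by
    apply HasCompactSupport.intro hsupp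
    intro x hx
    have h0 : fderiv ℝ F x = 0 := by
      rw [(notMem_tsupport_iff_eventuallyEq.mp hx).fderiv_eq]; exact fderiv_const_apply 0
    simp [h0]
  have hcont2 : Continuous fun x : E => F x * (fderiv ℝ Φ x v * exp (-Φ x)) :=
    (hF.continuous).mul (((hΦ.continuous_fderiv one_ne_zero).clm_apply continuous_const).mul
      (((hΦ.continuous).neg).rexp))
  have hsupp2 : HasCompactSupport fun x : E => F x * (fderiv ℝ Φ x v * exp (-Φ x)) := by
    apply HasCompactSupport.intro hsupp
    intro x hx
    simp [image_eq_zero_of_notMem_tsupport hx]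
  have hint1 := hcont1.integrable_of_hasCompactSupport hsupp1 (μ := μ)
  have hint2 := hcont2.integrable_of_hasCompactSupport hsupp2 (μ := μ)
  rw [integral_sub hint1 hint2] at key
  linarith

section Rot
variable {d : ℕ}

local notation "Ed" => EuclideanSpace ℝ (Fin d)

/-- Rotation by angle `θ` in the `(i,j)` coordinate plane, as a linear map. -/
noncomputable def rotL (i j : Fin d) (θ : ℝ) : Ed →ₗ[ℝ] Ed :=
  LinearMap.id
    + (((cos θ - 1) • ((EuclideanSpace.proj i : Ed →L[ℝ] ℝ) : Ed →ₗ[ℝ] ℝ)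
        - sin θ • ((EuclideanSpace.proj j : Ed →L[ℝ] ℝ) : Ed →ₗ[ℝ] ℝ)).smulRight
        (EuclideanSpace.single i 1))
    + ((sin θ • ((EuclideanSpace.proj i : Ed →L[ℝ] ℝ) : Ed →ₗ[ℝ] ℝ)
        + (cos θ - 1) • ((EuclideanSpace.proj j : Ed →L[ℝ] ℝ) : Ed →ₗ[ℝ] ℝ)).smulRight
        (EuclideanSpace.single j 1))

theorem rotL_apply (i j : Fin d) (θ : ℝ) (v : Ed) :
    rotL i j θ v = v + ((cos θ - 1) * v i - sin θ * v j) • EuclideanSpace.single i 1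
      + (sin θ * v i + (cos θ - 1) * v j) • EuclideanSpace.single j 1 := by
  simp only [rotL, LinearMap.add_apply, LinearMap.id_apply, LinearMap.smulRight_apply,
    LinearMap.sub_apply, LinearMap.smul_apply, ContinuousLinearMap.coe_coe,
    PiLp.proj_apply, smul_eq_mul]

theorem rotL_inner (i j : Fin d) (hij : i ≠ j) (θ : ℝ) (u v : Ed) :
    ⟪rotL i j θ u, rotL i j θ v⟫ = ⟪u, v⟫ := by
  rw [rotL_apply, rotL_apply]
  have h := sin_sq_add_cos_sq θ
  simp only [inner_add_left, inner_add_right, real_inner_smul_left, real_inner_smul_right,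
    EuclideanSpace.inner_single_left, EuclideanSpace.inner_single_right,
    EuclideanSpace.single_apply, PiLp.smul_apply, smul_eq_mul, map_one, conj_trivial,
    if_pos rfl, if_neg hij, if_neg (Ne.symm hij), if_true, mul_one, mul_zero, one_mul]
  linear_combination (u i * v i + u j * v j) * h

/-- Rotation in the `(i,j)` coordinate plane as a linear isometry equivalence. -/
noncomputable def rotIso (i j : Fin d) (hij : i ≠ j) (θ : ℝ) : Ed ≃ₗᵢ[ℝ] Ed :=
  ((rotL i j θ).isometryOfInner (rotL_inner i j hij θ)).toLinearIsometryEquiv rfl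

theorem rotIso_apply (i j : Fin d) (hij : i ≠ j) (θ : ℝ) (v : Ed) :
    rotIso i j hij θ v = v + ((cos θ - 1) * v i - sin θ * v j) • EuclideanSpace.single i 1
      + (sin θ * v i + (cos θ - 1) * v j) • EuclideanSpace.single j 1 :=
  rotL_apply i j θ v

end Rot

section Sphere
variable {d : ℕ}

local notation "Ed" => EuclideanSpace ℝ (Fin d)

theorem coord_le_norm (w : Ed) (i : Fin d) : |w i| ≤ ‖w‖ := by
  have h1 : ⟪EuclideanSpace.single i (1:ℝ), w⟫ = w i := by
    simp [EuclideanSpace.inner_single_left]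
  calc |w i| = |⟪EuclideanSpace.single i (1:ℝ), w⟫| := by rw [h1]
  _ ≤ ‖EuclideanSpace.single i (1:ℝ)‖ * ‖w‖ := abs_real_inner_le_norm _ _
  _ = ‖w‖ := by rw [EuclideanSpace.norm_single]; simp

theorem rot_identity {ν : Measure Ed} (hν : IsUniformSphereMeasure ν)
    (F : Ed → ℝ) (hF : ContDiff ℝ (⊤:ℕ∞) F) (hFc : HasCompactSupport F)
    (i j : Fin d) (hij : i ≠ j) :
    ∫ v, (v i * fderiv ℝ F v (EuclideanSpace.single j 1)
        - v j * fderiv ℝ F v (EuclideanSpace.single i 1)) ∂ν = 0 := by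
  haveI : IsProbabilityMeasure ν := hν.1
  set R : ℝ → Ed ≃ₗᵢ[ℝ] Ed := rotIso i j hij with hR
  set A : Ed → Ed := fun w => w i • EuclideanSpace.single j 1
    - w j • EuclideanSpace.single i 1 with hA
  have hFdiff : Differentiable ℝ F := hF.differentiable (by simp)
  have hAcont : Continuous A := by
    exact ((EuclideanSpace.proj i).continuous.smul continuous_const).sub
      ((EuclideanSpace.proj j).continuous.smul continuous_const)
  -- coordinates of rotated vector
  have hcoord : ∀ (θ : ℝ) (v : Ed),
      (R θ v) i = cos θ * v i - sin θ * v j ∧ (R θ v) j = sin θ * v i + cos θ * v j := by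
    intro θ v
    rw [hR, rotIso_apply]
    constructor <;>
      simp [PiLp.add_apply, PiLp.smul_apply, EuclideanSpace.single_apply, hij, Ne.symm hij,
        smul_eq_mul] <;> ring
  -- derivative of the rotation in θ
  have hAR : ∀ (θ : ℝ) (v : Ed), HasDerivAt (fun θ => R θ v) (A (R θ v)) θ := by
    intro θ v
    have h1 : HasDerivAt (fun θ : ℝ => (cos θ - 1) * v i - sin θ * v j)
        ((-sin θ) * v i - cos θ * v j) θ := by
      exact (((hasDerivAt_cos θ).sub_const 1).mul_const (v i)).sub
        ((hasDerivAt_sin θ).mul_const (v j))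
    have h2 : HasDerivAt (fun θ : ℝ => sin θ * v i + (cos θ - 1) * v j)
        (cos θ * v i + (-sin θ) * v j) θ := by
      exact ((hasDerivAt_sin θ).mul_const (v i)).add
        (((hasDerivAt_cos θ).sub_const 1).mul_const (v j))
    have hfun : (fun θ : ℝ => R θ v) = fun θ : ℝ =>
        v + ((cos θ - 1) * v i - sin θ * v j) • EuclideanSpace.single i 1
          + (sin θ * v i + (cos θ - 1) * v j) • EuclideanSpace.single j 1 := by
      funext θ; rw [hR]; exact rotIso_apply i j hij θ v
    rw [hfun]
    have hD := (((h1.smul_const (EuclideanSpace.single i (1:ℝ))).const_add v).add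
      (h2.smul_const (EuclideanSpace.single j (1:ℝ))))
    refine hD.congr_deriv ?_
    obtain ⟨hci, hcj⟩ := hcoord θ v
    rw [hA]
    simp only [hci, hcj]
    module
  -- bound on the derivative
  obtain ⟨M, hM⟩ := (hFc.fderiv ℝ).exists_bound_of_continuous
    (hF.continuous_fderiv (by simp))
  have hM0 : 0 ≤ M := le_trans (norm_nonneg _) (hM 0)
  have hsph : ∀ᵐ v ∂ν, ‖v‖ = 1 := by
    rw [ae_iff]
    refine measure_mono_null ?_ hν.2.1
    intro v hv
    simp only [Set.mem_compl_iff, mem_sphere_iff_norm, sub_zero]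
    exact hv
  have h_bound : ∀ᵐ v ∂ν, ∀ θ ∈ ball (0:ℝ) 1,
      ‖fderiv ℝ F (R θ v) (A (R θ v))‖ ≤ 2 * M := by
    filter_upwards [hsph] with v hv θ _
    have hAn : ∀ w : Ed, ‖A w‖ ≤ 2 * ‖w‖ := by
      intro w
      rw [hA]
      calc ‖w i • EuclideanSpace.single j (1:ℝ) - w j • EuclideanSpace.single i 1‖
          ≤ ‖w i • EuclideanSpace.single j (1:ℝ)‖ + ‖w j • EuclideanSpace.single i (1:ℝ)‖ :=
            norm_sub_le _ _
      _ = |w i| + |w j| := by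
        rw [norm_smul, norm_smul, EuclideanSpace.norm_single, EuclideanSpace.norm_single]
        simp [Real.norm_eq_abs]
      _ ≤ ‖w‖ + ‖w‖ := add_le_add (coord_le_norm w i) (coord_le_norm w j)
      _ = 2 * ‖w‖ := by ring
    calc ‖fderiv ℝ F (R θ v) (A (R θ v))‖
        ≤ ‖fderiv ℝ F (R θ v)‖ * ‖A (R θ v)‖ := ContinuousLinearMap.le_opNorm _ _
    _ ≤ M * (2 * ‖R θ v‖) := by
        apply mul_le_mul (hM _) (hAn _) (norm_nonneg _) hM0
    _ = 2 * M := by rw [(R θ).norm_map, hv]; ring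
  have h_diff : ∀ᵐ v ∂ν, ∀ θ ∈ ball (0:ℝ) 1,
      HasDerivAt (fun θ => F (R θ v)) (fderiv ℝ F (R θ v) (A (R θ v))) θ := by
    filter_upwards with v θ _
    exact (hFdiff (R θ v)).hasFDerivAt.comp_hasDerivAt θ (hAR θ v)
  have hF_meas : ∀ᶠ θ in nhds (0:ℝ), AEStronglyMeasurable (fun v => F (R θ v)) ν :=
    Filter.Eventually.of_forall fun θ =>
      (hF.continuous.comp (R θ).continuous).aestronglyMeasurable
  have hF_int : Integrable (fun v => F (R 0 v)) ν :=
    (hF.continuous.comp (R 0).continuous).integrable_of_hasCompactSupport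
      (hFc.comp_homeomorph (R 0).toHomeomorph)
  have hF'_meas : AEStronglyMeasurable (fun v => fderiv ℝ F (R 0 v) (A (R 0 v))) ν := by
    apply Continuous.aestronglyMeasurable
    exact ((hF.continuous_fderiv (by simp)).comp
      (R 0).continuous).clm_apply (hAcont.comp (R 0).continuous)
  obtain ⟨-, hG⟩ := hasDerivAt_integral_of_dominated_loc_of_deriv_le (ball_mem_nhds 0 one_pos) hF_meas hF_int
    hF'_meas h_bound (integrable_const (2 * M)) h_diff
  have hconst : (fun θ : ℝ => ∫ v, F (R θ v) ∂ν) = fun _ : ℝ => ∫ v, F v ∂ν := by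
    funext θ
    calc ∫ v, F (R θ v) ∂ν = ∫ y, F y ∂(ν.map (R θ)) :=
      (integral_map (R θ).continuous.measurable.aemeasurable
        hF.continuous.aestronglyMeasurable).symm
    _ = ∫ v, F v ∂ν := by rw [hν.2.2 (R θ)]
  rw [hconst] at hG
  have hzero : ∫ v, fderiv ℝ F (R 0 v) (A (R 0 v)) ∂ν = 0 :=
    hG.unique (hasDerivAt_const 0 _)
  have hR0 : ∀ v : Ed, R 0 v = v := by
    intro v
    rw [hR, rotIso_apply]
    simp
  rw [← hzero]
  apply integral_congr_ae
  filter_upwards with v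
  rw [hR0 v, hA]
  rw [map_sub, (fderiv ℝ F v).map_smul, (fderiv ℝ F v).map_smul]
  simp
end Sphere

section Sphere2
variable {d : ℕ}
local notation "Ed" => EuclideanSpace ℝ (Fin d)

theorem eucl_sum_single (v : Ed) : ∑ j, v j • EuclideanSpace.single j (1:ℝ) = v := by
  ext k
  simp [Pi.single_apply]

theorem fderiv_apply_self (F : Ed → ℝ) (v u : Ed) :
    fderiv ℝ F v u = ∑ j, u j * fderiv ℝ F v (EuclideanSpace.single j 1) := by
  conv_lhs => rw [← eucl_sum_single u]
  rw [map_sum]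
  simp only [_root_.map_smul, smul_eq_mul]

theorem inner_eq_sum (w v : Ed) : ⟪w, v⟫ = ∑ i, w i * v i := by
  simp [PiLp.inner_apply, RCLike.inner_apply, conj_trivial]
  exact Finset.sum_congr rfl fun _ _ => mul_comm _ _

theorem coord_identity {ν : Measure Ed} (hν : IsUniformSphereMeasure ν) (hd : 2 ≤ d)
    (F : Ed → ℝ) (hF : ContDiff ℝ (⊤:ℕ∞) F) (hFc : HasCompactSupport F) (i : Fin d) :
    ∫ v, (fderiv ℝ F v (EuclideanSpace.single i 1) - v i * fderiv ℝ F v v) ∂ν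
      = ((d:ℝ) - 1) * ∫ v, v i * F v ∂ν := by
  haveI : IsProbabilityMeasure ν := hν.1
  have hFdiff : Differentiable ℝ F := hF.differentiable (by simp)
  have hfdcont : Continuous fun v : Ed => fderiv ℝ F v :=
    hF.continuous_fderiv (by simp)
  have hintaux : ∀ G : Ed → ℝ, Continuous G → (∀ v ∉ tsupport F, G v = 0) → Integrable G ν :=
    fun G hc h0 => hc.integrable_of_hasCompactSupport (HasCompactSupport.intro hFc h0)
  have hfd0 : ∀ v ∉ tsupport F, fderiv ℝ F v = 0 := by
    intro v hv
    rw [(notMem_tsupport_iff_eventuallyEq.mp hv).fderiv_eq]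
    exact fderiv_const_apply 0
  set S : Ed → ℝ := fun v => ∑ j ∈ Finset.univ.erase i,
    (v i * (v j * fderiv ℝ F v (EuclideanSpace.single j 1)) + v i * F v
      - v j * v j * fderiv ℝ F v (EuclideanSpace.single i 1)) with hSdef
  have hterm_int : ∀ j : Fin d, Integrable (fun v : Ed =>
      v i * (v j * fderiv ℝ F v (EuclideanSpace.single j 1)) + v i * F v
        - v j * v j * fderiv ℝ F v (EuclideanSpace.single i 1)) ν := by
    intro j
    apply hintaux
    · exact (((EuclideanSpace.proj i).continuous.mul ((EuclideanSpace.proj j).continuous.mul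
        (hfdcont.clm_apply continuous_const))).add
          ((EuclideanSpace.proj i).continuous.mul hF.continuous)).sub
        (((EuclideanSpace.proj j).continuous.mul (EuclideanSpace.proj j).continuous).mul
          (hfdcont.clm_apply continuous_const))
    · intro v hv
      rw [hfd0 v hv, image_eq_zero_of_notMem_tsupport hv]
      simp
  have hS : ∫ v, S v ∂ν = 0 := by
    rw [hSdef]
    rw [integral_finset_sum _ fun j _ => hterm_int j]
    refine Finset.sum_eq_zero fun j hj => ?_
    have hji : j ≠ i := Finset.ne_of_mem_erase hj
    have hHsm : ContDiff ℝ (⊤:ℕ∞) (fun u : Ed => u j * F u) :=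
      ((EuclideanSpace.proj j : Ed →L[ℝ] ℝ).contDiff).mul hF
    have hHc : HasCompactSupport (fun u : Ed => u j * F u) := by
      apply HasCompactSupport.intro hFc
      intro v hv
      rw [image_eq_zero_of_notMem_tsupport hv, mul_zero]
    have key := rot_identity hν _ hHsm hHc i j (Ne.symm hji)
    rw [← key]
    apply integral_congr_ae
    filter_upwards with v
    have hHd : fderiv ℝ (fun u : Ed => u j * F u) v
        = v j • fderiv ℝ F v + F v • (EuclideanSpace.proj j : Ed →L[ℝ] ℝ) := by
      have := fderiv_fun_mul (𝕜 := ℝ) (x := v)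
        ((EuclideanSpace.proj j : Ed →L[ℝ] ℝ).differentiable.differentiableAt) (hFdiff v)
      rw [(EuclideanSpace.proj j : Ed →L[ℝ] ℝ).fderiv] at this
      simpa using this
    rw [hHd]
    simp only [ContinuousLinearMap.add_apply, ContinuousLinearMap.smul_apply,
      ContinuousLinearMap.coe_smul', Pi.smul_apply, smul_eq_mul, PiLp.proj_apply,
      EuclideanSpace.single_apply, if_pos rfl, if_neg hji, if_true]
    ring
  have hsph : ∀ᵐ v ∂ν, ‖v‖ = 1 := by
    rw [ae_iff]
    refine measure_mono_null ?_ hν.2.1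
    intro v hv
    simpa using hv
  have hae : ∀ᵐ v ∂ν, S v = ((d:ℝ) - 1) * (v i * F v)
      + v i * fderiv ℝ F v v - fderiv ℝ F v (EuclideanSpace.single i 1) := by
    filter_upwards [hsph] with v hv
    have hsum2 : ∑ j, v j * v j = 1 := by
      have : ⟪v, v⟫ = 1 := by
        rw [real_inner_self_eq_norm_sq, hv]; norm_num
      rw [← this, inner_eq_sum]
    have hsum1 : ∑ j, v j * fderiv ℝ F v (EuclideanSpace.single j 1) = fderiv ℝ F v v :=
      (fderiv_apply_self F v v).symm
    have hcast : ((d - 1 : ℕ) : ℝ) = (d : ℝ) - 1 := by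
      have : (1:ℕ) ≤ d := le_trans one_le_two hd
      push_cast [Nat.cast_sub this]
      ring
    have e1 : ∑ j ∈ Finset.univ.erase i,
        (v i * (v j * fderiv ℝ F v (EuclideanSpace.single j 1)))
        = v i * (fderiv ℝ F v v - v i * fderiv ℝ F v (EuclideanSpace.single i 1)) := by
      rw [← Finset.mul_sum, Finset.sum_erase_eq_sub (Finset.mem_univ i), hsum1]
    have e2 : ∑ _j ∈ Finset.univ.erase i, v i * F v = ((d:ℝ) - 1) * (v i * F v) := by
      rw [Finset.sum_const, Finset.card_erase_of_mem (Finset.mem_univ i), Finset.card_univ,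
        Fintype.card_fin, nsmul_eq_mul, hcast]
    have e3 : ∑ j ∈ Finset.univ.erase i,
        (v j * v j * fderiv ℝ F v (EuclideanSpace.single i 1))
        = (1 - v i * v i) * fderiv ℝ F v (EuclideanSpace.single i 1) := by
      rw [← Finset.sum_mul, Finset.sum_erase_eq_sub (Finset.mem_univ i), hsum2]
    rw [hSdef]
    simp only [Finset.sum_sub_distrib, Finset.sum_add_distrib]
    rw [e1, e2, e3]
    ring
  rw [integral_congr_ae hae] at hS
  have hI1 : Integrable (fun v : Ed => ((d:ℝ) - 1) * (v i * F v)) ν := by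
    apply hintaux
    · exact continuous_const.mul ((EuclideanSpace.proj i).continuous.mul hF.continuous)
    · intro v hv; rw [image_eq_zero_of_notMem_tsupport hv]; ring
  have hI2 : Integrable (fun v : Ed => v i * fderiv ℝ F v v) ν := by
    apply hintaux
    · exact (EuclideanSpace.proj i).continuous.mul (hfdcont.clm_apply continuous_id)
    · intro v hv; rw [hfd0 v hv]; simp
  have hI3 : Integrable (fun v : Ed => fderiv ℝ F v (EuclideanSpace.single i 1)) ν := by
    apply hintaux
    · exact hfdcont.clm_apply continuous_const
    · intro v hv; rw [hfd0 v hv]; simp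
  have h1 : ∫ v, (((d:ℝ) - 1) * (v i * F v) + v i * fderiv ℝ F v v
        - fderiv ℝ F v (EuclideanSpace.single i 1)) ∂ν
      = (((d:ℝ) - 1) * ∫ v, v i * F v ∂ν) + (∫ v, v i * fderiv ℝ F v v ∂ν)
        - ∫ v, fderiv ℝ F v (EuclideanSpace.single i 1) ∂ν := by
    have hI12 : Integrable (fun v : Ed => ((d:ℝ) - 1) * (v i * F v)
        + v i * fderiv ℝ F v v) ν := hI1.add hI2
    rw [integral_sub hI12 hI3, integral_add hI1 hI2, integral_const_mul _ _]
  rw [h1] at hS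
  rw [integral_sub hI3 hI2]
  linarith

theorem sphere_ibp {ν : Measure Ed} (hν : IsUniformSphereMeasure ν) (hd : 2 ≤ d)
    (F : Ed → ℝ) (hF : ContDiff ℝ (⊤:ℕ∞) F) (hFc : HasCompactSupport F) (w0 : Ed) :
    ∫ v, fderiv ℝ F v (w0 - ⟪w0, v⟫ • v) ∂ν = ((d:ℝ) - 1) * ∫ v, F v * ⟪w0, v⟫ ∂ν := by
  haveI : IsProbabilityMeasure ν := hν.1
  have hfdcont : Continuous fun v : Ed => fderiv ℝ F v :=
    hF.continuous_fderiv (by simp)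
  have hintaux : ∀ G : Ed → ℝ, Continuous G → (∀ v ∉ tsupport F, G v = 0) → Integrable G ν :=
    fun G hc h0 => hc.integrable_of_hasCompactSupport (HasCompactSupport.intro hFc h0)
  have hfd0 : ∀ v ∉ tsupport F, fderiv ℝ F v = 0 := by
    intro v hv
    rw [(notMem_tsupport_iff_eventuallyEq.mp hv).fderiv_eq]
    exact fderiv_const_apply 0
  have hpt : ∀ v : Ed, fderiv ℝ F v (w0 - ⟪w0, v⟫ • v)
      = ∑ i, w0 i * (fderiv ℝ F v (EuclideanSpace.single i 1) - v i * fderiv ℝ F v v) := by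
    intro v
    rw [map_sub, (fderiv ℝ F v).map_smul, fderiv_apply_self F v w0, inner_eq_sum]
    simp only [smul_eq_mul, Finset.sum_mul, mul_sub]
    rw [← Finset.sum_sub_distrib]
    congr 1
    funext i
    ring
  simp_rw [hpt]
  have hIone : ∀ i : Fin d, Integrable (fun v : Ed =>
      w0 i * (fderiv ℝ F v (EuclideanSpace.single i 1) - v i * fderiv ℝ F v v)) ν := by
    intro i
    apply hintaux
    · exact continuous_const.mul ((hfdcont.clm_apply continuous_const).sub
        ((EuclideanSpace.proj i).continuous.mul (hfdcont.clm_apply continuous_id)))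
    · intro v hv; rw [hfd0 v hv]; simp
  rw [integral_finset_sum _ fun i _ => hIone i]
  have hcoord : ∀ i : Fin d, ∫ v, w0 i * (fderiv ℝ F v (EuclideanSpace.single i 1)
      - v i * fderiv ℝ F v v) ∂ν = w0 i * (((d:ℝ) - 1) * ∫ v, v i * F v ∂ν) := by
    intro i
    rw [integral_const_mul _ _, coord_identity hν hd F hF hFc i]
  simp_rw [hcoord]
  have hIvF : ∀ i : Fin d, Integrable (fun v : Ed => w0 i * (v i * F v)) ν := by
    intro i
    apply hintaux
    · exact continuous_const.mul ((EuclideanSpace.proj i).continuous.mul hF.continuous)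
    · intro v hv; rw [image_eq_zero_of_notMem_tsupport hv]; ring
  have : ∑ i, w0 i * (((d:ℝ) - 1) * ∫ v, v i * F v ∂ν)
      = ((d:ℝ) - 1) * ∑ i, ∫ v, w0 i * (v i * F v) ∂ν := by
    rw [Finset.mul_sum]
    congr 1
    funext i
    rw [integral_const_mul _ _]
    ring
  rw [this, ← integral_finset_sum _ fun i _ => hIvF i]
  congr 1
  apply integral_congr_ae
  filter_upwards with v
  rw [inner_eq_sum, Finset.mul_sum]
  congr 1
  funext i
  ring
end Sphere2

section Main
variable {d : ℕ}
local notation "Ed" => EuclideanSpace ℝ (Fin d)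
local notation "Pd" => (EuclideanSpace ℝ (Fin d)) × (EuclideanSpace ℝ (Fin d))

theorem my_inner_gradient (φ : Ed → ℝ) (x u : Ed) :
    ⟪u, gradient φ x⟫ = fderiv ℝ φ x u := by
  rw [real_inner_comm]
  exact InnerProductSpace.toDual_symm_apply

theorem my_gradient_continuous (φ : Ed → ℝ) (hφ : ContDiff ℝ 1 φ) :
    Continuous fun x : Ed => gradient φ x :=
  (InnerProductSpace.toDual ℝ _).symm.continuous.comp (hφ.continuous_fderiv one_ne_zero)

theorem fderiv_slice1 (f : Pd → ℝ) (hf : Differentiable ℝ f) (ξ v u : Ed) :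
    fderiv ℝ (fun x : Ed => f (x, v)) ξ u = fderiv ℝ f (ξ, v) (u, 0) := by
  have h : HasFDerivAt (fun x : Ed => f (x, v))
      ((fderiv ℝ f (ξ, v)).comp ((ContinuousLinearMap.id ℝ Ed).prod 0)) ξ :=
    (hf (ξ, v)).hasFDerivAt.comp ξ ((hasFDerivAt_id ξ).prodMk (hasFDerivAt_const v ξ))
  rw [h.fderiv]
  simp

theorem fderiv_slice2 (f : Pd → ℝ) (hf : Differentiable ℝ f) (ξ v u : Ed) :
    fderiv ℝ (fun y : Ed => f (ξ, y)) v u = fderiv ℝ f (ξ, v) (0, u) := by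
  have h : HasFDerivAt (fun y : Ed => f (ξ, y))
      ((fderiv ℝ f (ξ, v)).comp ((0 : Ed →L[ℝ] Ed).prod (ContinuousLinearMap.id ℝ Ed))) v :=
    (hf (ξ, v)).hasFDerivAt.comp v ((hasFDerivAt_const ξ v).prodMk (hasFDerivAt_id v))
  rw [h.fderiv]
  simp

theorem transportOp_eq (Φ : Ed → ℝ) (f : Pd → ℝ) (hf : Differentiable ℝ f) (p : Pd) :
    transportOp d Φ f p = -(fderiv ℝ f p (p.2, 0))
      + (1 / ((d : ℝ) - 1)) *
          fderiv ℝ f p (0, gradient Φ p.1 - ⟪gradient Φ p.1, p.2⟫ • p.2) := by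
  unfold transportOp
  rw [my_inner_gradient, my_inner_gradient, fderiv_slice1 f hf, fderiv_slice2 f hf]

theorem slice1_compactSupport (f : Pd → ℝ) (hsupp : HasCompactSupport f) (v : Ed) :
    HasCompactSupport fun x : Ed => f (x, v) := by
  apply HasCompactSupport.intro (hsupp.image continuous_fst)
  intro x hx
  by_contra hne
  exact hx ⟨(x, v), subset_tsupport f hne, rfl⟩

theorem slice2_compactSupport (f : Pd → ℝ) (hsupp : HasCompactSupport f) (ξ : Ed) :
    HasCompactSupport fun y : Ed => f (ξ, y) := by
  apply HasCompactSupport.intro (hsupp.image continuous_snd)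
  intro y hy
  by_contra hne
  exact hy ⟨(ξ, y), subset_tsupport f hne, rfl⟩
end Main

/-- Antisymmetry of the transport operator `A` in `L²(μ)`, `μ = e^{-Φ(ξ)} dξ ⊗ ν`:
for all smooth compactly supported `g, h`, `∫ (A g) h dμ + ∫ g (A h) dμ = 0`. -/
theorem transport_operator_antisymmetric
    (d : ℕ) (hd : 2 ≤ d)
    (ν : Measure (EuclideanSpace ℝ (Fin d))) (hν : IsUniformSphereMeasure ν)
    (Φ : EuclideanSpace ℝ (Fin d) → ℝ) (hΦ : ContDiff ℝ 1 Φ)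
    (g h : EuclideanSpace ℝ (Fin d) × EuclideanSpace ℝ (Fin d) → ℝ)
    (hgsm : ContDiff ℝ (⊤ : ℕ∞) g) (hgsupp : HasCompactSupport g)
    (hhsm : ContDiff ℝ (⊤ : ℕ∞) h) (hhsupp : HasCompactSupport h) :
    (∫ p, transportOp d Φ g p * h p
        ∂((volume.withDensity fun ξ => ENNReal.ofReal (Real.exp (-Φ ξ))).prod ν))
      + (∫ p, g p * transportOp d Φ h p
        ∂((volume.withDensity fun ξ => ENNReal.ofReal (Real.exp (-Φ ξ))).prod ν)) = 0 := by
  classical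
  have hdR : ((d : ℝ) - 1) ≠ 0 := by
    have : (2 : ℝ) ≤ (d : ℝ) := by exact_mod_cast hd
    linarith
  haveI : IsProbabilityMeasure ν := hν.1
  set μ1 : Measure (EuclideanSpace ℝ (Fin d)) :=
    volume.withDensity fun ξ => ENNReal.ofReal (Real.exp (-Φ ξ)) with hμ1def
  haveI hμ1fc : IsFiniteMeasureOnCompacts μ1 := by
    rw [hμ1def]
    constructor
    intro K hK
    rw [withDensity_apply _ hK.measurableSet]
    obtain ⟨C, hC⟩ := hK.exists_bound_of_continuousOn (hΦ.continuous.neg.rexp.continuousOn)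
    calc ∫⁻ ξ in K, ENNReal.ofReal (exp (-Φ ξ)) ∂volume
        ≤ ∫⁻ _ in K, ENNReal.ofReal C ∂volume := by
          apply setLIntegral_mono measurable_const
          intro ξ hξ
          exact ENNReal.ofReal_le_ofReal (le_trans (le_abs_self _) (by simpa using hC ξ hξ))
    _ = ENNReal.ofReal C * volume K := by rw [setLIntegral_const]
    _ < ⊤ := ENNReal.mul_lt_top ENNReal.ofReal_lt_top hK.measure_lt_top
  haveI : SigmaFinite μ1 := by infer_instance
  set μ : Measure (EuclideanSpace ℝ (Fin d) × EuclideanSpace ℝ (Fin d)) := μ1.prod ν with hμdef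
  -- withDensity conversion
  have hwd : ∀ φ : EuclideanSpace ℝ (Fin d) → ℝ,
      ∫ ξ, φ ξ ∂μ1 = ∫ ξ, exp (-Φ ξ) * φ ξ := by
    intro φ
    rw [hμ1def]
    have hmeas : Measurable fun ξ : EuclideanSpace ℝ (Fin d) => Real.toNNReal (exp (-Φ ξ)) :=
      (hΦ.continuous.neg.rexp).measurable.real_toNNReal
    rw [show (fun ξ : EuclideanSpace ℝ (Fin d) => ENNReal.ofReal (Real.exp (-Φ ξ)))
        = fun ξ => ((Real.toNNReal (exp (-Φ ξ)) : NNReal) : ENNReal) from rfl]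
    rw [integral_withDensity_eq_integral_smul hmeas]
    congr 1
    funext ξ
    rw [NNReal.smul_def, Real.coe_toNNReal _ (exp_pos _).le, smul_eq_mul]
  -- smoothness bookkeeping
  have hgsm' : ContDiff ℝ (⊤ : ℕ∞) g := hgsm.of_le (by simp)
  have hhsm' : ContDiff ℝ (⊤ : ℕ∞) h := hhsm.of_le (by simp)
  set f : EuclideanSpace ℝ (Fin d) × EuclideanSpace ℝ (Fin d) → ℝ :=
    fun p => g p * h p with hfdef
  have hfsm : ContDiff ℝ (⊤ : ℕ∞) f := hgsm'.mul hhsm'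
  have hfsupp : HasCompactSupport f := hgsupp.mul_right
  have hgd : Differentiable ℝ g := hgsm'.differentiable (by simp)
  have hhd : Differentiable ℝ h := hhsm'.differentiable (by simp)
  have hfd : Differentiable ℝ f := hfsm.differentiable (by simp)
  -- gradient of the potential
  set w0 : EuclideanSpace ℝ (Fin d) → EuclideanSpace ℝ (Fin d) := fun ξ => gradient Φ ξ
    with hw0def
  have hw0cont : Continuous w0 := my_gradient_continuous Φ hΦ
  -- main auxiliary functions
  set V : EuclideanSpace ℝ (Fin d) × EuclideanSpace ℝ (Fin d) → EuclideanSpace ℝ (Fin d) :=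
    fun p => w0 p.1 - ⟪w0 p.1, p.2⟫ • p.2 with hVdef
  set T1 : EuclideanSpace ℝ (Fin d) × EuclideanSpace ℝ (Fin d) → ℝ :=
    fun p => fderiv ℝ f p (p.2, 0) with hT1def
  set T2 : EuclideanSpace ℝ (Fin d) × EuclideanSpace ℝ (Fin d) → ℝ :=
    fun p => fderiv ℝ f p (0, V p) with hT2def
  set W : EuclideanSpace ℝ (Fin d) × EuclideanSpace ℝ (Fin d) → ℝ :=
    fun p => f p * ⟪w0 p.1, p.2⟫ with hWdef
  have hVcont : Continuous V := (hw0cont.comp continuous_fst).sub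
    ((Continuous.inner (𝕜 := ℝ) (hw0cont.comp continuous_fst) continuous_snd).smul continuous_snd)
  have hfdCont : Continuous fun p => fderiv ℝ f p :=
    hfsm.continuous_fderiv (by simp)
  have hT1cont : Continuous T1 := hfdCont.clm_apply (continuous_snd.prodMk continuous_const)
  have hT2cont : Continuous T2 := hfdCont.clm_apply (continuous_const.prodMk hVcont)
  have hWcont : Continuous W := (hgsm'.continuous.mul hhsm'.continuous).mul
    (Continuous.inner (𝕜 := ℝ) (hw0cont.comp continuous_fst) continuous_snd)
  have hfd0 : ∀ p ∉ tsupport f, fderiv ℝ f p = 0 := by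
    intro p hp
    rw [(notMem_tsupport_iff_eventuallyEq.mp hp).fderiv_eq]
    exact fderiv_const_apply 0
  have hT1supp : HasCompactSupport T1 :=
    HasCompactSupport.intro hfsupp fun p hp => by rw [hT1def]; simp [hfd0 p hp]
  have hT2supp : HasCompactSupport T2 :=
    HasCompactSupport.intro hfsupp fun p hp => by rw [hT2def]; simp [hfd0 p hp]
  have hWsupp : HasCompactSupport W :=
    HasCompactSupport.intro hfsupp fun p hp => by
      rw [hWdef]; simp [image_eq_zero_of_notMem_tsupport hp]
  have hT1int : Integrable T1 μ := hT1cont.integrable_of_hasCompactSupport hT1supp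
  have hT2int : Integrable T2 μ := hT2cont.integrable_of_hasCompactSupport hT2supp
  have hWint : Integrable W μ := hWcont.integrable_of_hasCompactSupport hWsupp
  -- Leibniz rule
  have hLeib : ∀ p, transportOp d Φ g p * h p + g p * transportOp d Φ h p
      = -T1 p + (1 / ((d : ℝ) - 1)) * T2 p := by
    intro p
    rw [transportOp_eq Φ g hgd p, transportOp_eq Φ h hhd p]
    simp only [hT1def, hT2def]
    have hmul : ∀ z, fderiv ℝ f p z = fderiv ℝ g p z * h p + g p * fderiv ℝ h p z := by
      intro z
      have hh := fderiv_fun_mul (𝕜 := ℝ) (x := p) (hgd p) (hhd p)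
      rw [hfdef]
      rw [show fderiv ℝ (fun p => g p * h p) p = g p • fderiv ℝ h p + h p • fderiv ℝ g p from hh]
      simp only [ContinuousLinearMap.add_apply, ContinuousLinearMap.smul_apply, smul_eq_mul]
      ring
    rw [hmul, hmul]
    rw [hVdef, hw0def]
    ring
  -- integrability of the two summands in the statement
  have hAc : ∀ (k : EuclideanSpace ℝ (Fin d) × EuclideanSpace ℝ (Fin d) → ℝ),
      ContDiff ℝ (⊤ : ℕ∞) k → Continuous fun p => transportOp d Φ k p := by
    intro k hk
    have hkd : Differentiable ℝ k := hk.differentiable (by simp)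
    have : (fun p => transportOp d Φ k p) = fun p => -(fderiv ℝ k p (p.2, 0))
        + (1 / ((d : ℝ) - 1)) * fderiv ℝ k p (0, V p) := by
      funext p
      rw [transportOp_eq Φ k hkd p, hVdef, hw0def]
    rw [this]
    have hkC : Continuous fun p => fderiv ℝ k p :=
      hk.continuous_fderiv (by simp)
    exact ((hkC.clm_apply (continuous_snd.prodMk continuous_const)).neg).add
      (continuous_const.mul (hkC.clm_apply (continuous_const.prodMk hVcont)))
  have hAgh_int : Integrable (fun p => transportOp d Φ g p * h p) μ := by
    apply Continuous.integrable_of_hasCompactSupport ((hAc g hgsm').mul hhsm'.continuous)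
    exact HasCompactSupport.intro hhsupp fun p hp => by
      simp [image_eq_zero_of_notMem_tsupport hp]
  have hgAh_int : Integrable (fun p => g p * transportOp d Φ h p) μ := by
    apply Continuous.integrable_of_hasCompactSupport (hgsm'.continuous.mul (hAc h hhsm'))
    exact HasCompactSupport.intro hgsupp fun p hp => by
      simp [image_eq_zero_of_notMem_tsupport hp]
  -- the two key identities
  have key1 : ∫ p, T1 p ∂μ = ∫ p, W p ∂μ := by
    rw [hμdef]
    rw [integral_prod_symm _ hT1int, integral_prod_symm _ hWint]
    apply integral_congr_ae
    filter_upwards with v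
    rw [hwd fun ξ => T1 (ξ, v), hwd fun ξ => W (ξ, v)]
    have hsl : ∀ ξ, T1 (ξ, v) = fderiv ℝ (fun x => f (x, v)) ξ v := by
      intro ξ
      rw [hT1def]
      exact (fderiv_slice1 f hfd ξ v v).symm
    have hW' : ∀ ξ, W (ξ, v) = f (ξ, v) * fderiv ℝ Φ ξ v := by
      intro ξ
      rw [hWdef, hw0def]
      dsimp only
      congr 1
      rw [real_inner_comm]
      exact my_inner_gradient Φ ξ v
    simp_rw [hsl, hW']
    have hF1 : ContDiff ℝ 1 fun x => f (x, v) :=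
      (hfsm.comp (contDiff_id.prodMk contDiff_const)).of_le (by exact_mod_cast le_top)
    have hibp := my_integral_fderiv_fun_mul_exp (μ := volume) Φ hΦ _ hF1
      (slice1_compactSupport f hfsupp v) v
    calc ∫ ξ, exp (-Φ ξ) * fderiv ℝ (fun x => f (x, v)) ξ v
        = ∫ ξ, fderiv ℝ (fun x => f (x, v)) ξ v * exp (-Φ ξ) := by
          apply integral_congr_ae
          filter_upwards with ξ
          ring
    _ = ∫ ξ, f (ξ, v) * (fderiv ℝ Φ ξ v * exp (-Φ ξ)) := hibp
    _ = ∫ ξ, exp (-Φ ξ) * (f (ξ, v) * fderiv ℝ Φ ξ v) := by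
          apply integral_congr_ae
          filter_upwards with ξ
          ring
  have key2 : ∫ p, T2 p ∂μ = ((d : ℝ) - 1) * ∫ p, W p ∂μ := by
    rw [hμdef]
    rw [integral_prod _ hT2int, integral_prod _ hWint, ← integral_const_mul]
    apply integral_congr_ae
    filter_upwards with ξ
    have hsl2 : ∀ v, T2 (ξ, v) = fderiv ℝ (fun y => f (ξ, y)) v (w0 ξ - ⟪w0 ξ, v⟫ • v) := by
      intro v
      rw [hT2def, hVdef]
      exact (fderiv_slice2 f hfd ξ v _).symm
    simp_rw [hsl2]
    have hF2sm : ContDiff ℝ (⊤ : ℕ∞) fun y => f (ξ, y) :=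
      hfsm.comp (contDiff_const.prodMk contDiff_id)
    rw [sphere_ibp hν hd _ hF2sm (slice2_compactSupport f hfsupp ξ) (w0 ξ)]
  -- conclusion
  rw [← integral_add hAgh_int hgAh_int]
  rw [integral_congr_ae (Filter.Eventually.of_forall hLeib)]
  have hnT1 : Integrable (fun p => -T1 p) μ := hT1int.neg
  have hcT2 : Integrable (fun p => (1 / ((d : ℝ) - 1)) * T2 p) μ := hT2int.const_mul _
  rw [integral_add hnT1 hcT2, integral_neg, integral_const_mul]
  rw [key1, key2]
  field_simp
  ring
end

section
/- Let d ∈ ℕ, d ≥ 2, let v ∈ ℝ^d with ‖v‖ = 1, and let u₀, w₁, …, w_d, w ∈ ℝ^d all be orthogonal to v. Then the linear span in ℝ × ℝ^d × ℝ^d of the 2d + 2 vectors (1, v, u₀); (0, 0, e_j − v_j v) for j = 1, …, d; (0, e_j − v_j v, w_j) for j = 1, …, d; and (0, −(d−1) v, w), has dimension exactly 2d. (This is the linear-algebra core of the verification of the parabolic Hörmander condition: the vector fields 𝒩₀ + ∂_t, 𝒩₁,…,𝒩_d together with the brackets [𝒩_j, 𝒩₀ + ∂_t] and Σ_j [𝒩_j,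 [𝒩_j, 𝒩₀ + ∂_t]] span the 2d-dimensional tangent space of (0,∞) × ℝ^d × S^{d−1} at every point.) -/
/-!
The span is the hyperplane `{(t, a, b) | ⟪b, v⟫ = 0}` of `ℝ × ℝ^d × ℝ^d`, of dimension `2d`.
Every generator has third component orthogonal to `v`. Conversely, the vectors `e_j - v_j v`
are the projections of a basis onto `v^⊥`, so they span it: the second family gives
`0 × 0 × v^⊥`, subtracting it from the third family gives `0 × v^⊥ × 0`, the last generator
gives `(0, v, 0)` because `d ≠ 1`, and then the first one gives `(1, 0, 0)`.
-/

open scoped RealInnerProductSpace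

open Module Submodule

theorem Submodule.finrank_prod {K M M' : Type*} [DivisionRing K] [AddCommGroup M] [Module K M]
    [AddCommGroup M'] [Module K M'] [FiniteDimensional K M] [FiniteDimensional K M']
    (p : Submodule K M) (q : Submodule K M') :
    finrank K (p.prod q) = finrank K p + finrank K q := by
  have hinj : Function.Injective (p.subtype.prodMap q.subtype) :=
    Prod.map_injective.2 ⟨p.injective_subtype, q.injective_subtype⟩
  rw [← Module.finrank_prod, ← LinearMap.finrank_range_of_inj hinj, LinearMap.range_prodMap,
    range_subtype, range_subtype]

theorem span_range_sub_inner_smul_eq_orthogonal {𝕜 E ι : Type*} [RCLike 𝕜]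
    [NormedAddCommGroup E] [InnerProductSpace 𝕜 E] {v : E} (hv : ‖v‖ = 1) {b : ι → E}
    (hb : span 𝕜 (Set.range b) = ⊤) :
    span 𝕜 (Set.range fun j => b j - inner 𝕜 v (b j) • v) = (𝕜 ∙ v)ᗮ := by
  have hproj :
      (fun j => b j - inner 𝕜 v (b j) • v) = ((𝕜 ∙ v)ᗮ.starProjection : E →ₗ[𝕜] E) ∘ b := by
    ext j
    simp [starProjection_orthogonal, starProjection_singleton, hv]
  rw [hproj, Set.range_comp, span_image, hb, Submodule.map_top]
  exact range_starProjection _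

theorem EuclideanSpace.span_range_single_sub_smul {ι : Type*} [Fintype ι] [DecidableEq ι]
    {v : EuclideanSpace ℝ ι} (hv : ‖v‖ = 1) :
    span ℝ (Set.range fun j => EuclideanSpace.single j (1 : ℝ) - v j • v) = (ℝ ∙ v)ᗮ := by
  simpa [EuclideanSpace.inner_single_right] using
    span_range_sub_inner_smul_eq_orthogonal hv (EuclideanSpace.basisFun ι ℝ).toBasis.span_eq

/-- `p j` plays the role of `e_j - v_j v` and `c` that of `-(d - 1)`. -/
def hormanderVectors {𝕜 E ι : Type*} [Semiring 𝕜] [AddCommMonoid E] [Module 𝕜 E]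
    (v u₀ w' : E) (p w : ι → E) (c : 𝕜) : Set (𝕜 × E × E) :=
  insert (1, v, u₀)
    (Set.range (fun j => ((0 : 𝕜), (0 : E), p j)) ∪ Set.range (fun j => ((0 : 𝕜), p j, w j)) ∪
      {(0, c • v, w')})

theorem span_hormanderVectors {𝕜 E ι : Type*} [DivisionRing 𝕜] [AddCommGroup E] [Module 𝕜 E]
    {K : Submodule 𝕜 E} {v u₀ w' : E} {p w : ι → E} {c : 𝕜} (hvK : (𝕜 ∙ v) ⊔ K = ⊤)
    (hp : span 𝕜 (Set.range p) = K) (hu₀ : u₀ ∈ K) (hw : ∀ j, w j ∈ K) (hw' : w' ∈ K)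
    (hc : c ≠ 0) :
    span 𝕜 (hormanderVectors v u₀ w' p w c) =
      (⊤ : Submodule 𝕜 𝕜).prod ((⊤ : Submodule 𝕜 E).prod K) := by
  set S := span 𝕜 (hormanderVectors v u₀ w' p w c)
  have hthird : K ≤ S.comap (LinearMap.inr 𝕜 𝕜 (E × E) ∘ₗ LinearMap.inr 𝕜 E E) := by
    rw [← hp, span_le, Set.range_subset_iff]
    exact fun j => subset_span (Set.mem_insert_of_mem _ (Or.inl (Or.inl ⟨j, rfl⟩)))
  have hsecond : K ≤ S.comap (LinearMap.inr 𝕜 𝕜 (E × E) ∘ₗ LinearMap.inl 𝕜 E E) := by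
    rw [← hp, span_le, Set.range_subset_iff]
    intro j
    simpa using S.sub_mem (subset_span (Set.mem_insert_of_mem _ (Or.inl (Or.inr ⟨j, rfl⟩))))
      (hthird (hw j))
  have hv : ((0 : 𝕜), v, (0 : E)) ∈ S := by
    have hcv := S.sub_mem (subset_span (Set.mem_insert_of_mem _ (Or.inr rfl))) (hthird hw')
    simpa [smul_smul, hc] using S.smul_mem c⁻¹ hcv
  have hsecond_top : ⊤ ≤ S.comap (LinearMap.inr 𝕜 𝕜 (E × E) ∘ₗ LinearMap.inl 𝕜 E E) :=
    hvK ▸ sup_le (span_singleton_le_iff_mem _ _ |>.2 hv) hsecond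
  have hfirst : ((1 : 𝕜), (0 : E), (0 : E)) ∈ S := by
    convert S.sub_mem (S.sub_mem (subset_span (Set.mem_insert _ _)) hv) (hthird hu₀) using 1
    simp
  refine le_antisymm (span_le.2 ?_) ?_
  · have hpK : ∀ j, p j ∈ K := fun j => hp ▸ subset_span (Set.mem_range_self j)
    rintro x (rfl | (⟨j, rfl⟩ | ⟨j, rfl⟩) | rfl) <;> simp [hu₀, hw, hw', hpK]
  · rintro ⟨t, a, b⟩ ⟨-, -, hb⟩
    have hdecomp : ((t, a, b) : 𝕜 × E × E) = t • (1, 0, 0) + (0, a, 0) + (0, 0, b) := by simp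
    rw [hdecomp]
    exact add_mem (add_mem (S.smul_mem t hfirst) (hsecond_top trivial)) (hthird hb)

/-- Linear-algebra core of the parabolic Hörmander condition for the fiber lay-down
process: for `d ≥ 2`, a unit vector `v ∈ ℝ^d` and vectors `u₀, w₁, …, w_d, w` all
orthogonal to `v`, the span in `ℝ × ℝ^d × ℝ^d` of the `2d + 2` vectors
`(1, v, u₀)`, `(0, 0, e_j - v_j v)` (`j = 1, …, d`), `(0, e_j - v_j v, w_j)`
(`j = 1, …, d`) and `(0, -(d-1) v, w)` has dimension exactly `2d`. -/
theorem hormander_span_dimension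
    (d : ℕ) (hd : 2 ≤ d)
    (v u₀ w' : EuclideanSpace ℝ (Fin d)) (w : Fin d → EuclideanSpace ℝ (Fin d))
    (hv : ‖v‖ = 1) (hu₀ : ⟪u₀, v⟫ = 0) (hw : ∀ j, ⟪w j, v⟫ = 0) (hw' : ⟪w', v⟫ = 0) :
    Module.finrank ℝ
      (Submodule.span ℝ
        (insert ((1 : ℝ), v, u₀)
          ((Set.range fun j : Fin d =>
              ((0 : ℝ), (0 : EuclideanSpace ℝ (Fin d)),
                EuclideanSpace.single j (1 : ℝ) - (v j) • v)) ∪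
           (Set.range fun j : Fin d =>
              ((0 : ℝ), EuclideanSpace.single j (1 : ℝ) - (v j) • v, w j)) ∪
           {((0 : ℝ), -(((d : ℝ) - 1)) • v, w')}))) = 2 * d := by
  have hc : -((d : ℝ) - 1) ≠ 0 := by
    have : (2 : ℝ) ≤ d := by exact_mod_cast hd
    linarith
  have hv₀ : v ≠ 0 := norm_ne_zero_iff.1 (hv ▸ one_ne_zero)
  have : Fact (finrank ℝ (EuclideanSpace ℝ (Fin d)) = (d - 1) + 1) :=
    ⟨by rw [finrank_euclideanSpace_fin]; omega⟩
  have hspan := span_hormanderVectors (sup_orthogonal_of_hasOrthogonalProjection (K := ℝ ∙ v))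
    (EuclideanSpace.span_range_single_sub_smul hv) (mem_orthogonal_singleton_iff_inner_left.2 hu₀)
    (fun j => mem_orthogonal_singleton_iff_inner_left.2 (hw j))
    (mem_orthogonal_singleton_iff_inner_left.2 hw') hc
  rw [hormanderVectors] at hspan
  rw [hspan, Submodule.finrank_prod, Submodule.finrank_prod, finrank_top, finrank_top,
    finrank_self, finrank_euclideanSpace_fin, finrank_orthogonal_span_singleton (n := d - 1) hv₀]
  omega
end
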